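/- Let A, u : ℝ × ℝ³ → ℝ³ and ψ : ℝ × ℝ³ → ℝ be C² fields, set B = ∇×A, and suppose the ideal-MHD un-curled Faraday law ∂A/∂t − u×B + ∇ψ = 0 holds (i.e. E = −u×B). Then the magnetic helicity density satisfies the local conservation law ∂(A·B)/∂t + ∇·[ u (A·B) + (ψ − A·u) B ] = 0. -/

import Mathlib

noncomputable section

/-- Vectors in ℝ³. -/
abbrev V3 := Fin 3 → ℝ

/-- Euclidean dot product on ℝ³. -/
def dot3 (a b : V3) : ℝ := a 0 * b 0 + a 1 * b 1 + a 2 * b 2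

/-- Cross product on ℝ³. -/
def cross3 (a b : V3) : V3 :=
  ![a 1 * b 2 - a 2 * b 1, a 2 * b 0 - a 0 * b 2, a 0 * b 1 - a 1 * b 0]

/-- Euclidean norm on ℝ³. -/
def norm3 (a : V3) : ℝ := Real.sqrt (dot3 a a)

/-- Spatial partial derivative of a time-dependent scalar field. -/
def pdS (i : Fin 3) (f : ℝ × V3 → ℝ) (p : ℝ × V3) : ℝ :=
  fderiv ℝ (fun x => f (p.1, x)) p.2 (Pi.single i 1)

/-- Spatial gradient of a time-dependent scalar field. -/
def gradS (f : ℝ × V3 → ℝ) (p : ℝ × V3) : V3 := fun i => pdS i f p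

/-- Spatial divergence of a time-dependent vector field. -/
def divS (F : ℝ × V3 → V3) (p : ℝ × V3) : ℝ :=
  pdS 0 (fun q => F q 0) p + pdS 1 (fun q => F q 1) p + pdS 2 (fun q => F q 2) p

/-- Spatial curl of a time-dependent vector field. -/
def curlS (F : ℝ × V3 → V3) (p : ℝ × V3) : V3 :=
  ![pdS 1 (fun q => F q 2) p - pdS 2 (fun q => F q 1) p,
    pdS 2 (fun q => F q 0) p - pdS 0 (fun q => F q 2) p,
    pdS 0 (fun q => F q 1) p - pdS 1 (fun q => F q 0) p]

/-- Time partial derivative of a scalar field. -/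
def dtS (f : ℝ × V3 → ℝ) (p : ℝ × V3) : ℝ := deriv (fun t => f (t, p.2)) p.1

/-- Time partial derivative of a vector field. -/
def dtV (F : ℝ × V3 → V3) (p : ℝ × V3) : V3 := deriv (fun t => F (t, p.2)) p.1

/-- Fluid shear tensor `σ_ij = ½(∂u_i/∂x_j + ∂u_j/∂x_i) − (1/3) δ_ij ∇·u`. -/
def shearS (u : ℝ × V3 → V3) (p : ℝ × V3) : Fin 3 → Fin 3 → ℝ :=
  fun i j => (1 / 2) * (pdS j (fun q => u q i) p + pdS i (fun q => u q j) p)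
    - (1 / 3) * (if i = j then (1 : ℝ) else 0) * divS u p

/-- Matrix–vector product `(m·v)_i = Σ_j m_ij v_j`. -/
def matVec (m : Fin 3 → Fin 3 → ℝ) (v : V3) : V3 := fun i => ∑ j : Fin 3, m i j * v j

/-- Quadratic form `a·m·b = Σ_{i,j} a_i m_ij b_j`. -/
def quad3 (a : V3) (m : Fin 3 → Fin 3 → ℝ) (b : V3) : ℝ :=
  ∑ i : Fin 3, ∑ j : Fin 3, a i * m i j * b j

/-- Directional derivative `(v·∇)F` in the spatial variables. -/
def dirDS (v : V3) (F : ℝ × V3 → V3) (p : ℝ × V3) : V3 :=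
  fun i => v 0 * pdS 0 (fun q => F q i) p + v 1 * pdS 1 (fun q => F q i) p
    + v 2 * pdS 2 (fun q => F q i) p

/-!
Write `∂ₜA = E - ∇ψ` with `E = u × B`. Since time and space derivatives commute and
`∇ × ∇ψ = 0`, `∂ₜB = ∇ × E`, so `∂ₜ(A·B) = (E - ∇ψ)·B + A·(∇ × E)`. The identities
`∇·(ψB) = ∇ψ·B` (as `∇·B = 0`) and `∇·(E × A) = A·(∇ × E) - E·B` turn this into the
balance law `∂ₜ(A·B) + ∇·(ψB - E × A) = 2 E·B` for an arbitrary `E`. In ideal MHD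
`E·B = (u × B)·B = 0`, and `E × A = (u·A) B - (A·B) u` gives
`ψB - E × A = u (A·B) + (ψ - A·u) B`.
-/

open Matrix

theorem dot3_eq_dotProduct (a b : V3) : dot3 a b = a ⬝ᵥ b := (vec3_dotProduct a b).symm

theorem cross3_eq_crossProduct (a b : V3) : cross3 a b = a ⨯₃ b := rfl

theorem fderiv_fderiv_apply_comm {E F : Type*} [NormedAddCommGroup E] [NormedSpace ℝ E]
    [NormedAddCommGroup F] [NormedSpace ℝ F] {f : E → F} (hf : ContDiff ℝ 2 f) (x v w : E) :
    fderiv ℝ (fun y => fderiv ℝ f y v) x w = fderiv ℝ (fun y => fderiv ℝ f y w) x v := by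
  have hdf : DifferentiableAt ℝ (fderiv ℝ f) x :=
    (hf.fderiv_right le_rfl).differentiable one_ne_zero x
  have happly (z : E) :
      fderiv ℝ (fun y => fderiv ℝ f y z) x = (fderiv ℝ (fderiv ℝ f) x).flip z := by
    rw [fderiv_clm_apply hdf (differentiableAt_const z)]
    simp
  simpa [happly] using hf.contDiffAt.isSymmSndFDerivAt (by simp) w v

section ScalarRules

variable {f g : ℝ × V3 → ℝ} {p : ℝ × V3}

theorem DifferentiableAt.spatialSlice (hf : DifferentiableAt ℝ f p) :
    DifferentiableAt ℝ (fun x => f (p.1, x)) p.2 :=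
  hf.comp p.2 ((differentiableAt_const p.1).prodMk differentiableAt_id)

theorem DifferentiableAt.timeSlice (hf : DifferentiableAt ℝ f p) :
    DifferentiableAt ℝ (fun t => f (t, p.2)) p.1 :=
  hf.comp p.1 (differentiableAt_id.prodMk (differentiableAt_const p.2))

theorem pdS_eq_fderiv (hf : DifferentiableAt ℝ f p) (i : Fin 3) :
    pdS i f p = fderiv ℝ f p (0, Pi.single i 1) := by
  have hslice : HasFDerivAt (fun x : V3 => f (p.1, x))
      ((fderiv ℝ f p).comp (ContinuousLinearMap.inr ℝ ℝ V3)) p.2 :=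
    hf.hasFDerivAt.comp p.2 (hasFDerivAt_prodMk_right p.1 p.2)
  rw [pdS, hslice.fderiv]
  rfl

theorem dtS_eq_fderiv (hf : DifferentiableAt ℝ f p) : dtS f p = fderiv ℝ f p (1, 0) := by
  have hline : HasDerivAt (fun t : ℝ => (t, p.2)) (1, 0) p.1 :=
    (hasDerivAt_id p.1).prodMk (hasDerivAt_const p.1 p.2)
  exact (hf.hasFDerivAt.comp_hasDerivAt p.1 hline).deriv

theorem pdS_sub (i : Fin 3) (hf : DifferentiableAt ℝ f p) (hg : DifferentiableAt ℝ g p) :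
    pdS i (fun q => f q - g q) p = pdS i f p - pdS i g p := by
  rw [pdS, fderiv_fun_sub hf.spatialSlice hg.spatialSlice]
  rfl

theorem pdS_mul (i : Fin 3) (hf : DifferentiableAt ℝ f p) (hg : DifferentiableAt ℝ g p) :
    pdS i (fun q => f q * g q) p = pdS i f p * g p + f p * pdS i g p := by
  rw [pdS, fderiv_fun_mul hf.spatialSlice hg.spatialSlice]
  simp only [_root_.add_apply, _root_.smul_apply, smul_eq_mul]
  rw [pdS, pdS]
  ring

theorem dtS_add (hf : DifferentiableAt ℝ f p) (hg : DifferentiableAt ℝ g p) :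
    dtS (fun q => f q + g q) p = dtS f p + dtS g p :=
  deriv_fun_add hf.timeSlice hg.timeSlice

theorem dtS_sub (hf : DifferentiableAt ℝ f p) (hg : DifferentiableAt ℝ g p) :
    dtS (fun q => f q - g q) p = dtS f p - dtS g p :=
  deriv_fun_sub hf.timeSlice hg.timeSlice

theorem dtS_mul (hf : DifferentiableAt ℝ f p) (hg : DifferentiableAt ℝ g p) :
    dtS (fun q => f q * g q) p = dtS f p * g p + f p * dtS g p :=
  deriv_fun_mul hf.timeSlice hg.timeSlice

end ScalarRules

section SecondDerivatives

variable {n : ℕ} {f : ℝ × V3 → ℝ}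

theorem pdS_fun_eq (hf : Differentiable ℝ f) (i : Fin 3) :
    pdS i f = fun p => fderiv ℝ f p (0, Pi.single i 1) :=
  funext fun p => pdS_eq_fderiv (hf p) i

theorem dtS_fun_eq (hf : Differentiable ℝ f) : dtS f = fun p => fderiv ℝ f p (1, 0) :=
  funext fun p => dtS_eq_fderiv (hf p)

theorem ContDiff.pdS (hf : ContDiff ℝ (n + 1) f) (i : Fin 3) : ContDiff ℝ n (pdS i f) := by
  rw [pdS_fun_eq (hf.differentiable (by simp))]
  exact (contDiff_succ_iff_fderiv_apply.1 hf).2.2 _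

theorem ContDiff.dtS (hf : ContDiff ℝ (n + 1) f) : ContDiff ℝ n (dtS f) := by
  rw [dtS_fun_eq (hf.differentiable (by simp))]
  exact (contDiff_succ_iff_fderiv_apply.1 hf).2.2 _

theorem pdS_pdS_comm (hf : ContDiff ℝ 2 f) (i j : Fin 3) (p : ℝ × V3) :
    pdS i (pdS j f) p = pdS j (pdS i f) p := by
  rw [pdS_eq_fderiv ((hf.pdS (n := 1) j).differentiable one_ne_zero p),
    pdS_eq_fderiv ((hf.pdS (n := 1) i).differentiable one_ne_zero p),
    pdS_fun_eq (hf.differentiable two_ne_zero) i, pdS_fun_eq (hf.differentiable two_ne_zero) j,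
    fderiv_fderiv_apply_comm hf]

theorem dtS_pdS_comm (hf : ContDiff ℝ 2 f) (i : Fin 3) (p : ℝ × V3) :
    dtS (pdS i f) p = pdS i (dtS f) p := by
  rw [dtS_eq_fderiv ((hf.pdS (n := 1) i).differentiable one_ne_zero p),
    pdS_eq_fderiv ((hf.dtS (n := 1)).differentiable one_ne_zero p),
    pdS_fun_eq (hf.differentiable two_ne_zero), dtS_fun_eq (hf.differentiable two_ne_zero),
    fderiv_fderiv_apply_comm hf]

end SecondDerivatives

section Regularity

variable {n : ℕ} {F G : ℝ × V3 → V3} {f : ℝ × V3 → ℝ}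

theorem ContDiff.gradS (hf : ContDiff ℝ (n + 1) f) : ContDiff ℝ n (gradS f) :=
  contDiff_pi.2 fun i => hf.pdS i

theorem ContDiff.curlS (hF : ContDiff ℝ (n + 1) F) : ContDiff ℝ n (curlS F) := by
  have hF' := fun i => (contDiff_pi.1 hF i).pdS
  refine contDiff_pi.2 fun i => ?_
  fin_cases i <;> simp only [_root_.curlS, Fin.reduceFinMk, Matrix.cons_val] <;> fun_prop

theorem ContDiff.cross3 (hF : ContDiff ℝ n F) (hG : ContDiff ℝ n G) :
    ContDiff ℝ n (fun q => cross3 (F q) (G q)) := by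
  have hF' := contDiff_pi.1 hF
  have hG' := contDiff_pi.1 hG
  refine contDiff_pi.2 fun i => ?_
  fin_cases i <;> simp only [_root_.cross3, Fin.reduceFinMk, Matrix.cons_val] <;> fun_prop

end Regularity

section VectorCalculus

variable {F G : ℝ × V3 → V3} {f : ℝ × V3 → ℝ} {p : ℝ × V3}

theorem dtV_apply (hF : DifferentiableAt ℝ F p) (i : Fin 3) :
    dtV F p i = dtS (fun q => F q i) p := by
  have hline : HasDerivAt (fun t => F (t, p.2)) (dtV F p) p.1 :=
    (hF.comp p.1 (differentiableAt_id.prodMk (differentiableAt_const p.2))).hasDerivAt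
  exact (hasDerivAt_pi.1 hline i).deriv.symm

theorem dtS_dot3 (hF : DifferentiableAt ℝ F p) (hG : DifferentiableAt ℝ G p) :
    dtS (fun q => dot3 (F q) (G q)) p = dot3 (dtV F p) (G p) + dot3 (F p) (dtV G p) := by
  have hF' := differentiableAt_pi.1 hF
  have hG' := differentiableAt_pi.1 hG
  simp (disch := fun_prop) only [dot3, dtS_add, dtS_mul, dtV_apply hF, dtV_apply hG]
  ring

theorem dtV_curlS (hF : ContDiff ℝ 2 F) (p : ℝ × V3) : dtV (curlS F) p = curlS (dtV F) p := by
  have hF' := contDiff_pi.1 hF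
  have hpd : ∀ i j, Differentiable ℝ (pdS i fun q => F q j) := fun i j =>
    ((hF' j).pdS (n := 1) i).differentiable one_ne_zero
  have hdt : ∀ j, (fun q => dtV F q j) = dtS (fun q => F q j) := fun j =>
    funext fun q => dtV_apply (hF.differentiable two_ne_zero q) j
  ext i
  rw [dtV_apply ((hF.curlS (n := 1)).differentiable one_ne_zero p)]
  fin_cases i <;>
  · simp (disch := fun_prop) only [curlS, Fin.reduceFinMk, Matrix.cons_val, dtS_sub, hdt,
      dtS_pdS_comm (hF' _)]

theorem curlS_sub (hF : DifferentiableAt ℝ F p) (hG : DifferentiableAt ℝ G p) :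
    curlS (fun q => F q - G q) p = curlS F p - curlS G p := by
  have hF' := differentiableAt_pi.1 hF
  have hG' := differentiableAt_pi.1 hG
  ext i
  fin_cases i <;>
  · simp (disch := fun_prop) only [curlS, Fin.reduceFinMk, Matrix.cons_val, Pi.sub_apply,
      pdS_sub]
    ring

theorem curlS_gradS (hf : ContDiff ℝ 2 f) : curlS (gradS f) p = 0 := by
  ext i
  fin_cases i <;> simp [curlS, gradS, pdS_pdS_comm hf]

theorem divS_sub (hF : DifferentiableAt ℝ F p) (hG : DifferentiableAt ℝ G p) :
    divS (fun q => F q - G q) p = divS F p - divS G p := by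
  have hF' := differentiableAt_pi.1 hF
  have hG' := differentiableAt_pi.1 hG
  simp (disch := fun_prop) only [divS, Pi.sub_apply, pdS_sub]
  ring

theorem divS_smul (hf : DifferentiableAt ℝ f p) (hF : DifferentiableAt ℝ F p) :
    divS (fun q => f q • F q) p = dot3 (gradS f p) (F p) + f p * divS F p := by
  have hF' := differentiableAt_pi.1 hF
  simp (disch := fun_prop) only [divS, Pi.smul_apply, smul_eq_mul, pdS_mul]
  simp only [dot3, gradS]
  ring

theorem divS_cross3 (hF : DifferentiableAt ℝ F p) (hG : DifferentiableAt ℝ G p) :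
    divS (fun q => cross3 (F q) (G q)) p = dot3 (G p) (curlS F p) - dot3 (F p) (curlS G p) := by
  have hF' := differentiableAt_pi.1 hF
  have hG' := differentiableAt_pi.1 hG
  simp (disch := fun_prop) only [divS, cross3, Matrix.cons_val, pdS_sub, pdS_mul]
  simp only [dot3, curlS, Matrix.cons_val]
  ring

theorem divS_curlS (hF : ContDiff ℝ 2 F) : divS (curlS F) p = 0 := by
  have hF' := contDiff_pi.1 hF
  have hpd : ∀ i j, Differentiable ℝ (pdS i fun q => F q j) := fun i j =>
    ((hF' j).pdS (n := 1) i).differentiable one_ne_zero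
  simp (disch := fun_prop) only [divS, curlS, Matrix.cons_val, pdS_sub, pdS_pdS_comm (hF' _)]
  ring

end VectorCalculus

theorem magnetic_helicity_balance {A E : ℝ × V3 → V3} {ψ : ℝ × V3 → ℝ}
    (hA : ContDiff ℝ 2 A) (hE : ContDiff ℝ 1 E) (hψ : ContDiff ℝ 2 ψ)
    (hdtA : ∀ q, dtV A q = E q - gradS ψ q) (p : ℝ × V3) :
    dtS (fun q => dot3 (A q) (curlS A q)) p
      + divS (fun q => ψ q • curlS A q - cross3 (E q) (A q)) p
      = 2 * dot3 (E p) (curlS A p) := by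
  have hB : ContDiff ℝ 1 (curlS A) := hA.curlS
  have hψB : DifferentiableAt ℝ (fun q => ψ q • curlS A q) p :=
    (hψ.differentiable two_ne_zero p).smul (hB.differentiable one_ne_zero p)
  have hEA : ContDiff ℝ 1 (fun q => cross3 (E q) (A q)) := hE.cross3 (hA.of_le one_le_two)
  have hdt : dtS (fun q => dot3 (A q) (curlS A q)) p
      = dot3 (E p - gradS ψ p) (curlS A p) + dot3 (A p) (curlS E p) := by
    rw [dtS_dot3 (hA.differentiable two_ne_zero p) (hB.differentiable one_ne_zero p),
      dtV_curlS hA, funext hdtA, curlS_sub (hE.differentiable one_ne_zero p)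
        (hψ.gradS.differentiable one_ne_zero p), curlS_gradS hψ, sub_zero]
  have hdiv : divS (fun q => ψ q • curlS A q - cross3 (E q) (A q)) p
      = dot3 (gradS ψ p) (curlS A p) - (dot3 (A p) (curlS E p) - dot3 (E p) (curlS A p)) := by
    rw [divS_sub hψB (hEA.differentiable one_ne_zero p),
      divS_smul (hψ.differentiable two_ne_zero p) (hB.differentiable one_ne_zero p),
      divS_curlS hA, divS_cross3 (hE.differentiable one_ne_zero p)
        (hA.differentiable two_ne_zero p), mul_zero, add_zero]
  rw [hdt, hdiv]
  simp only [dot3_eq_dotProduct, sub_dotProduct]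
  ring

/-- ideal-MHD magnetic helicity conservation law
`∂(A·B)/∂t + ∇·[u(A·B) + (ψ − A·u)B] = 0`. -/
theorem magnetic_helicity_conservation
    (A u : ℝ × V3 → V3) (ψ : ℝ × V3 → ℝ)
    (hA : ContDiff ℝ 2 A) (hu : ContDiff ℝ 2 u) (hψ : ContDiff ℝ 2 ψ)
    (B : ℝ × V3 → V3) (hB : ∀ p, B p = curlS A p)
    (hFaraday : ∀ p, dtV A p - cross3 (u p) (B p) + gradS ψ p = 0) :
    ∀ p : ℝ × V3,
      dtS (fun q => dot3 (A q) (B q)) p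
        + divS (fun q => dot3 (A q) (B q) • u q + (ψ q - dot3 (A q) (u q)) • B q) p
        = 0 := by
  obtain rfl : B = curlS A := funext hB
  intro p
  set E := fun q => cross3 (u q) (curlS A q)
  have hflux : (fun q => dot3 (A q) (curlS A q) • u q + (ψ q - dot3 (A q) (u q)) • curlS A q)
      = fun q => ψ q • curlS A q - cross3 (E q) (A q) := funext fun q => by
    simp only [E, cross3_eq_crossProduct, dot3_eq_dotProduct, cross_cross_eq_smul_sub_smul,
      dotProduct_comm (u q), dotProduct_comm (curlS A q)]
    module
  have hEB : dot3 (E p) (curlS A p) = 0 := by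
    rw [dot3_eq_dotProduct, dotProduct_comm]
    exact dot_cross_self _ _
  rw [hflux, magnetic_helicity_balance hA ((hu.of_le one_le_two).cross3 hA.curlS) hψ
    (fun q => by linear_combination (norm := module) hFaraday q), hEB, mul_zero]
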